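/- Let u, v : [0,δ] → ℝ³ be continuous with |u(t) − v(t)| ≤ R and the third components satisfying u₃(t) − v₃(t) ≥ C₁ > 0 for all t. For ε > 0 define u^ε = u + ε²e₃ and v^ε = v − ε²e₃ (e₃ the third standard basis vector). Then there exists C₅ > 0 independent of ε such that for all sufficiently small ε and all t ∈ [0,δ], 1/|u^ε(t) − v^ε(t)| − 1/|u(t) − v(t)| ≤ −C₅ ε². -/
import Mathlib


open Real MeasureTheory

private lemma stmt14_aux (R C₁ ε a2 d e : ℝ) (hR : 0 < R) (hC₁ : 0 < C₁) (hε : 0 < ε)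
    (hε1 : ε ≤ 1) (hd0 : 0 ≤ d) (he0 : 0 ≤ e) (ha2d : a2 ^ 2 ≤ d ^ 2)
    (hee : e ^ 2 = d ^ 2 + 4 * a2 * ε ^ 2 + 4 * ε ^ 4)
    (hC₁a : C₁ ≤ a2) (hdR : d ≤ R) :
    e⁻¹ - d⁻¹ ≤ -(4 * C₁ / ((R + 2) * R * (2 * R + 2))) * ε ^ 2 := by
  set C := 4 * C₁ / ((R + 2) * R * (2 * R + 2)) with hCdef
  have hCpos : 0 < C := by rw [hCdef]; positivity
  have hdpos : 0 < d := by nlinarith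
  have hepos : 0 < e := by nlinarith
  have hed0 : d ≤ e := by nlinarith
  have hε2 : ε ^ 2 ≤ 1 := by nlinarith
  have ha2R : a2 ≤ R := by nlinarith
  have he2le : e ^ 2 ≤ (R + 2) ^ 2 := by
    nlinarith [mul_le_mul ha2R hε2 (sq_nonneg ε) hR.le, mul_le_mul hdR hdR hd0 hR.le,
      mul_le_mul hε2 hε2 (sq_nonneg ε) zero_le_one]
  have heR : e ≤ R + 2 := (pow_le_pow_iff_left₀ he0 (by linarith) two_ne_zero).mp he2le
  have hed : e - d ≥ 4 * C₁ * ε ^ 2 / (2 * R + 2) := by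
    rw [ge_iff_le, div_le_iff₀ (by linarith)]
    nlinarith
  have h6 : C * ε ^ 2 * (e * d) ≤ C * ε ^ 2 * ((R + 2) * R) := by
    apply mul_le_mul_of_nonneg_left _ (by positivity)
    exact mul_le_mul heR hdR hd0 (by linarith)
  have h7 : C * ε ^ 2 * ((R + 2) * R) ≤ e - d := by
    rw [show C * ε ^ 2 * ((R + 2) * R) = 4 * C₁ * ε ^ 2 / (2 * R + 2) by
      rw [hCdef]; field_simp]
    exact hed
  rw [inv_sub_inv (ne_of_gt hepos) (ne_of_gt hdpos), div_le_iff₀ (by positivity)]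
  nlinarith

/-- Vertical separation decreases the potential: if `|u − v| ≤ R` and the third
components satisfy `u₃ − v₃ ≥ C₁ > 0` on `[0,δ]`, then with `u^ε = u + ε²e₃` and
`v^ε = v − ε²e₃` one has `1/|u^ε − v^ε| − 1/|u − v| ≤ −C₅ε²` for all small `ε`. -/
theorem stmt14 (δ R C₁ : ℝ) (hδ : 0 < δ) (hR : 0 < R) (hC₁ : 0 < C₁)
    (u v : ℝ → EuclideanSpace ℝ (Fin 3))
    (hu : Continuous u) (hv : Continuous v)
    (hdist : ∀ t ∈ Set.Icc (0:ℝ) δ, dist (u t) (v t) ≤ R)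
    (hgap : ∀ t ∈ Set.Icc (0:ℝ) δ, u t 2 - v t 2 ≥ C₁) :
    ∃ C₅ > (0:ℝ), ∃ ε₀ > (0:ℝ), ∀ ε, 0 < ε → ε ≤ ε₀ → ∀ t ∈ Set.Icc (0:ℝ) δ,
      (dist (u t + ε ^ 2 • (EuclideanSpace.single 2 (1:ℝ)))
            (v t - ε ^ 2 • (EuclideanSpace.single 2 (1:ℝ))))⁻¹
        - (dist (u t) (v t))⁻¹ ≤ -C₅ * ε ^ 2 := by
  refine ⟨4*C₁/((R+2)*R*(2*R+2)), by positivity, 1, one_pos, ?_⟩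
  intro ε hε hε1 t ht
  set d := dist (u t) (v t) with hd
  set e := dist (u t + ε ^ 2 • (EuclideanSpace.single 2 (1:ℝ)))
            (v t - ε ^ 2 • (EuclideanSpace.single 2 (1:ℝ))) with he
  have hd0 : (0:ℝ) ≤ d := dist_nonneg
  have he0 : (0:ℝ) ≤ e := dist_nonneg
  have hd2 : d ^ 2 = (u t 0 - v t 0)^2 + (u t 1 - v t 1)^2 + (u t 2 - v t 2)^2 := by
    rw [hd, EuclideanSpace.dist_eq, Real.sq_sqrt (Finset.sum_nonneg fun i _ => sq_nonneg _)]
    simp [Fin.sum_univ_three, Real.dist_eq, sq_abs]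
  have he2 : e ^ 2 = (u t 0 - v t 0)^2 + (u t 1 - v t 1)^2 + (u t 2 - v t 2 + 2*ε^2)^2 := by
    rw [he, EuclideanSpace.dist_eq, Real.sq_sqrt (Finset.sum_nonneg fun i _ => sq_nonneg _)]
    simp [Fin.sum_univ_three, Real.dist_eq, sq_abs, EuclideanSpace.single_apply,
      PiLp.add_apply, PiLp.sub_apply, PiLp.smul_apply, smul_eq_mul]
    ring
  have hC₁a : C₁ ≤ u t 2 - v t 2 := hgap t ht
  have hdR : d ≤ R := hd ▸ hdist t ht
  clear_value d e
  have ha2d : (u t 2 - v t 2) ^ 2 ≤ d ^ 2 := by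
    nlinarith [sq_nonneg (u t 0 - v t 0), sq_nonneg (u t 1 - v t 1)]
  have hee : e ^ 2 = d ^ 2 + 4 * (u t 2 - v t 2) * ε ^ 2 + 4 * ε ^ 4 := by
    rw [he2, hd2]; ring
  have := stmt14_aux R C₁ ε (u t 2 - v t 2) d e hR hC₁ hε hε1 hd0 he0 ha2d hee hC₁a hdR
  linarith
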